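/- Let ψ : {0,1}^n × {0,1} × {0,1} → ℂ satisfy ψ(x,y,z) = 0 whenever z ≠ |x|+y (mod 2), and suppose |ψ(x,y,z)|² = M_s(x,y,z) for all (x,y,z) (i.e. ψ is an amplitude function whose Born distribution is M_s). Fix t ∈ ℝ and define φ(x,y,z) = cos(t/2)·ψ(x,y,z) + i·sin(t/2)·ψ(x,¬y,¬z). Then |φ(x,y,z)|² = M_s^η(x,y,z) for all (x,y,z), where η = sin²(t/2). That is, applying the gate U_X(t) to the last two qubits of a state with Born distribution M_s produces a state with Born distribution M_s^η. -/
import Mathlib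


/-- The parity function `χ_s(x) = x · s mod 2`. -/
def chi {n : ℕ} (s x : Fin n → ZMod 2) : ZMod 2 := ∑ i, s i * x i

/-- The parity `|x|` of a bitstring: the sum of its bits mod 2. -/
def par {n : ℕ} (x : Fin n → ZMod 2) : ZMod 2 := ∑ i, x i

/-- The fermionized parity distribution `M_s` on `{0,1}^{n+2}`:
`M_s(x,y,z) = 2^{-n}` if `χ_s(x) = y` and `|x| + y = z`, and `0` otherwise. -/
noncomputable def Mdist {n : ℕ} (s : Fin n → ZMod 2) (x : Fin n → ZMod 2) (y z : ZMod 2) : ℝ :=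
  if chi s x = y ∧ par x + y = z then ((2 : ℝ) ^ n)⁻¹ else 0

/-- The fermionized noisy parity distribution `M_s^η` on `{0,1}^{n+2}`:
`(1-η)·2^{-n}` if `χ_s(x) = y` and `|x|+y = z`; `η·2^{-n}` if `χ_s(x) ≠ y` and `|x|+y = z`;
and `0` otherwise. -/
noncomputable def Mnoisy {n : ℕ} (η : ℝ) (s : Fin n → ZMod 2) (x : Fin n → ZMod 2) (y z : ZMod 2) : ℝ :=
  if chi s x = y ∧ par x + y = z then (1 - η) * ((2 : ℝ) ^ n)⁻¹
  else if chi s x ≠ y ∧ par x + y = z then η * ((2 : ℝ) ^ n)⁻¹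
  else 0

/-- Applying the gate `U_X(t)` to the last two qubits of a state with Born distribution
`M_s` produces a state with Born distribution `M_s^η` where `η = sin²(t/2)`: if `ψ` is
an amplitude function vanishing off `z = |x|+y` with `|ψ(x,y,z)|² = M_s(x,y,z)`, and
`φ(x,y,z) = cos(t/2)·ψ(x,y,z) + i·sin(t/2)·ψ(x,¬y,¬z)`, then
`|φ(x,y,z)|² = M_s^η(x,y,z)`. (In `ZMod 2`, `¬b = b + 1`.) -/
theorem born_UX_on_Mdist_amplitudes (n : ℕ) (s : Fin n → ZMod 2)
    (ψ : (Fin n → ZMod 2) → ZMod 2 → ZMod 2 → ℂ)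
    (hsupp : ∀ (x : Fin n → ZMod 2) (y z : ZMod 2), z ≠ par x + y → ψ x y z = 0)
    (hborn : ∀ (x : Fin n → ZMod 2) (y z : ZMod 2),
      Complex.normSq (ψ x y z) = Mdist s x y z)
    (t : ℝ) (φ : (Fin n → ZMod 2) → ZMod 2 → ZMod 2 → ℂ)
    (hφ : ∀ (x : Fin n → ZMod 2) (y z : ZMod 2),
      φ x y z = (Real.cos (t / 2) : ℂ) * ψ x y z
        + Complex.I * (Real.sin (t / 2) : ℂ) * ψ x (y + 1) (z + 1)) :
    ∀ (x : Fin n → ZMod 2) (y z : ZMod 2),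
      Complex.normSq (φ x y z) = Mnoisy ((Real.sin (t / 2)) ^ 2) s x y z := by
  intro x y z
  have hzero : ∀ y' z', Mdist s x y' z' = 0 → ψ x y' z' = 0 := fun y' z' h =>
    Complex.normSq_eq_zero.mp (by rw [hborn]; exact h)
  have hne : ∀ a b : ZMod 2, a ≠ b → a = b + 1 := by decide
  have hne' : ∀ a : ZMod 2, a ≠ a + 1 := by decide
  rw [hφ]
  by_cases hz : par x + y = z
  · by_cases hc : chi s x = y
    · have h2 : ψ x (y + 1) (z + 1) = 0 := by
        apply hzero
        simp only [Mdist, ite_eq_right_iff, and_imp]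
        intro h _; exact absurd h (hc ▸ hne' y)
      rw [h2, mul_zero, add_zero, Complex.normSq_mul, Complex.normSq_ofReal,
        hborn, Mdist, Mnoisy]
      simp only [hc, hz, and_self, if_true, ne_eq, not_true_eq_false, false_and, if_false]
      have h3 := Real.sin_sq_add_cos_sq (t / 2)
      have h4 : Real.cos (t / 2) * Real.cos (t / 2) = 1 - Real.sin (t / 2) ^ 2 := by
        nlinarith [h3]
      rw [h4]
    · have h1 : ψ x y z = 0 := by
        apply hzero
        simp [Mdist, hc]
      rw [h1, mul_zero, zero_add, Complex.normSq_mul, Complex.normSq_mul,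
        Complex.normSq_ofReal, Complex.normSq_I, hborn, Mdist, Mnoisy]
      have hc2 : chi s x = y + 1 := hne _ _ hc
      have hz2 : par x + (y + 1) = z + 1 := by rw [← add_assoc, hz]
      rw [if_pos ⟨hc2, hz2⟩, if_neg (fun h => hc h.1), if_pos ⟨hc, hz⟩]
      ring
  · have h1 : ψ x y z = 0 := hsupp x y z (fun h => hz h.symm)
    have h2 : ψ x (y + 1) (z + 1) = 0 := by
      apply hsupp
      intro h
      apply hz
      have : par x + (y + 1) = z + 1 := h.symm
      have h4 : ∀ a b : ZMod 2, a + 1 = b + 1 → a = b := by decide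
      exact h4 _ _ (by rw [← add_assoc] at this; exact this)
    rw [h1, h2, mul_zero, mul_zero, add_zero, Complex.normSq_zero, Mnoisy]
    simp [hz]
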